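/- arXiv:1108.6167 — 2 statements merged into one kernel-verified Lean document; each statement's English description precedes it below -/
import Mathlib

section
/- Let G be a group and let A and B be normal subgroups of G. Suppose A is the normal closure in G of a set {a_i : i ∈ I} and B is the subgroup of G generated by a set {b_j : j ∈ J}. Then the commutator subgroup [A,B] equals the normal closure in G of the set {[a_i, b_j] : i ∈ I, j ∈ J}. -/
open scoped commutatorElement

namespace Subgroup

variable {G : Type*} [Group G]

theorem commutator_normalClosure_closure_eq_bot {s t : Set G} [(closure t).Normal]
    (h : ∀ x ∈ s, ∀ y ∈ t, Commute x y) : ⁅normalClosure s, closure t⁆ = ⊥ := by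
  rw [commutator_eq_bot_iff_le_centralizer]
  -- `normalClosure_le_normal` applies since the centralizer of the normal `closure t` is normal.
  refine normalClosure_le_normal fun x hx => ?_
  rw [SetLike.mem_coe, centralizer_closure, mem_centralizer_iff]
  exact fun y hy => (h x hx y hy).symm.eq

theorem commutator_normalClosure_closure_le {s t : Set G} {N : Subgroup G} [N.Normal]
    [(closure t).Normal] (h : ∀ x ∈ s, ∀ y ∈ t, ⁅x, y⁆ ∈ N) :
    ⁅normalClosure s, closure t⁆ ≤ N := by
  let f := QuotientGroup.mk' N
  have hf : Function.Surjective f := QuotientGroup.mk'_surjective N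
  have : (closure (f '' t)).Normal := by
    rw [← MonoidHom.map_closure]
    exact Normal.map inferInstance f hf
  rw [← QuotientGroup.ker_mk' N, ← map_eq_bot_iff, map_commutator, map_normalClosure _ _ hf,
    MonoidHom.map_closure]
  apply commutator_normalClosure_closure_eq_bot
  rintro _ ⟨x, hx, rfl⟩ _ ⟨y, hy, rfl⟩
  rw [← commutatorElement_eq_one_iff_commute, ← map_commutatorElement, ← MonoidHom.mem_ker,
    QuotientGroup.ker_mk']
  exact h x hx y hy

theorem commutator_normalClosure_closure {s t : Set G} [(closure t).Normal] :
    ⁅normalClosure s, closure t⁆ = normalClosure (Set.image2 (⁅·, ·⁆) s t) :=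
  le_antisymm
    (commutator_normalClosure_closure_le fun _ hx _ hy =>
      subset_normalClosure (Set.mem_image2_of_mem hx hy))
    (normalClosure_le_normal <| Set.image2_subset_iff.2 fun _ hx _ hy =>
      commutator_mem_commutator (subset_normalClosure hx) (subset_closure hy))

end Subgroup

theorem commutator_eq_normalClosure_commutators_general
    {G : Type*} [Group G] (A B : Subgroup G) [B.Normal]
    {I J : Type*} (a : I → G) (b : J → G)
    (hA : A = Subgroup.normalClosure (Set.range a))
    (hB : B = Subgroup.closure (Set.range b)) :
    ⁅A, B⁆ = Subgroup.normalClosure {x : G | ∃ (i : I) (j : J), x = ⁅a i, b j⁆} := by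
  subst hA hB
  rw [Subgroup.commutator_normalClosure_closure]
  congr 1
  ext x
  simp [eq_comm]

/-- Let `G` be a group, `A` and `B` normal subgroups of `G`. If `A` is the normal closure of
a family `{a_i : i ∈ I}` and `B` is generated by a family `{b_j : j ∈ J}`, then the commutator
subgroup `[A,B]` is the normal closure in `G` of the family `{[a_i, b_j] : i ∈ I, j ∈ J}`. -/
theorem commutator_eq_normalClosure_commutators
    {G : Type*} [Group G] (A B : Subgroup G) [A.Normal] [B.Normal]
    {I J : Type*} (a : I → G) (b : J → G)
    (hA : A = Subgroup.normalClosure (Set.range a))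
    (hB : B = Subgroup.closure (Set.range b)) :
    ⁅A, B⁆ = Subgroup.normalClosure {x : G | ∃ (i : I) (j : J), x = ⁅a i, b j⁆} :=
  commutator_eq_normalClosure_commutators_general A B a b hA hB
end

section
/- Let A and B be nontrivial finite abelian groups, let G = A ∗ B be their free product, and let H = G/γ_2([G,G]) where γ_2([G,G]) = [[G,G],[G,G]] is the second term of the lower central series of the commutator subgroup [G,G]. Then every element of the center of H lies in the image of [G,G] under the quotient homomorphism G → H. -/
/-!
Map `G = A ∗ B` to the regular wreath product `(B → A) ⋊ B` by sending `a ↦ δ₁(a)` (the function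
supported at `1` with value `a`) and `b ↦ b`. The wreath product of abelian groups is metabelian,
so this map kills `⁅[G,G],[G,G]⁆`, and an element central modulo `⁅[G,G],[G,G]⁆` is sent to an
element `(f, r)` commuting with `δ₁(a)`. Comparing base components at the point `r` gives
`f r * a = δ₁(a) r * f r`, forcing `r = 1` when `a ≠ 1`; so the image of the element in `B` is
trivial, and by symmetry so is its image in `A`.
Since `A × B` is the abelianization of `A ∗ B`, the element lies in `[G,G]`.
-/

open Monoid Subgroup

theorem commute_of_mk_mem_center {G K : Type*} [Group G] [Group K] {N : Subgroup G} [N.Normal]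
    (f : G →* K) (hN : N ≤ f.ker) {g : G} (hg : (g : G ⧸ N) ∈ center (G ⧸ N)) (h : G) :
    Commute (f g) (f h) :=
  Commute.map (mem_center_iff.mp hg (h : G ⧸ N)).symm (QuotientGroup.lift N f hN)

theorem derivedSeries_le_ker {G K : Type*} [Group G] [Group K] (f : G →* K) {n : ℕ}
    (hK : derivedSeries K n = ⊥) : derivedSeries G n ≤ f.ker := by
  rw [← Subgroup.map_eq_bot_iff, ← le_bot_iff, ← hK]
  exact map_derivedSeries_le_derivedSeries f n

namespace SemidirectProduct

theorem commutator_le_range_inl {N G : Type*} [Group N] [CommGroup G] (φ : G →* MulAut N) :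
    commutator (N ⋊[φ] G) ≤ inl.range := by
  rw [range_inl_eq_ker_rightHom]
  exact Abelianization.commutator_subset_ker _

theorem derivedSeries_two_eq_bot {N G : Type*} [CommGroup N] [CommGroup G]
    (φ : G →* MulAut N) : derivedSeries (N ⋊[φ] G) 2 = ⊥ := by
  have hbase : ⁅inl.range, inl.range⁆ = (⊥ : Subgroup (N ⋊[φ] G)) :=
    commutator_eq_bot_iff_le_centralizer.mpr (le_centralizer _)
  exact le_bot_iff.mp <| hbase ▸
    commutator_mono (commutator_le_range_inl φ) (commutator_le_range_inl φ)

theorem right_eq_one_of_commute_inl_mulSingle {A B : Type*} [Group A] [Group B] [DecidableEq B]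
    {x : (B → A) ⋊[mulAutArrow] B} {a : A} (ha : a ≠ 1)
    (hx : Commute x (inl (Pi.mulSingle 1 a))) : x.right = 1 := by
  by_contra hr
  have key := congrFun (congrArg left hx.eq) x.right
  simp only [mul_left, left_inl, right_inl, map_one, MulAut.one_apply, Pi.mul_apply,
    mulAutArrow_apply_apply, Pi.mulSingle_eq_of_ne hr, one_mul] at key
  change x.left x.right * (Pi.mulSingle 1 a : B → A) (x.right⁻¹ * x.right) = _ at key
  simp at key
  exact ha key

end SemidirectProduct

namespace Monoid.Coprod

theorem mem_commutator_of_fst_eq_one_of_snd_eq_one {A B : Type*} [CommGroup A] [CommGroup B]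
    {g : A ∗ B} (hA : fst g = 1) (hB : snd g = 1) : g ∈ commutator (A ∗ B) := by
  let s : A × B →* Abelianization (A ∗ B) :=
    (Abelianization.of.comp inl).coprod (Abelianization.of.comp inr)
  have hs : s.comp toProd = Abelianization.of := hom_ext (by ext; simp [s]) (by ext; simp [s])
  rw [← Abelianization.ker_of, MonoidHom.mem_ker, ← hs, MonoidHom.comp_apply, ← prod_mk_fst_snd,
    hA, hB, Prod.mk_one_one, map_one]

variable (A B : Type*) [Group A] [Group B] [DecidableEq B]

noncomputable def toWreath : A ∗ B →* (B → A) ⋊[mulAutArrow] B :=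
  lift (SemidirectProduct.inl.comp (MonoidHom.mulSingle (fun _ : B ↦ A) 1)) SemidirectProduct.inr

variable {A B}

theorem right_toWreath (g : A ∗ B) : (toWreath A B g).right = snd g := by
  change (SemidirectProduct.rightHom.comp (toWreath A B)) g = snd g
  congr 1
  exact hom_ext (by ext; simp [toWreath]) (by ext; simp [toWreath])

theorem snd_eq_one_of_commute_toWreath {g : A ∗ B} {a : A} (ha : a ≠ 1)
    (h : Commute (toWreath A B g) (toWreath A B (inl a))) : snd g = 1 := by
  rw [← right_toWreath]
  exact SemidirectProduct.right_eq_one_of_commute_inl_mulSingle ha h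

end Monoid.Coprod

theorem center_le_image_commutator_general
    (A B : Type) [CommGroup A] [CommGroup B]
    [Nontrivial A] [Nontrivial B] :
    ∀ x ∈ Subgroup.center
        (Monoid.Coprod A B ⧸
          (⁅commutator (Monoid.Coprod A B), commutator (Monoid.Coprod A B)⁆ :
            Subgroup (Monoid.Coprod A B))),
      x ∈ Subgroup.map
        (QuotientGroup.mk'
          (⁅commutator (Monoid.Coprod A B), commutator (Monoid.Coprod A B)⁆ :
            Subgroup (Monoid.Coprod A B)))
        (commutator (Monoid.Coprod A B)) := by
  classical
  intro x hx
  obtain ⟨g, rfl⟩ := QuotientGroup.mk'_surjective _ x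
  have hcomm {K : Type} [Group K] (φ : Coprod A B →* K) (hK : derivedSeries K 2 = ⊥)
      (h : Coprod A B) : Commute (φ g) (φ h) :=
    commute_of_mk_mem_center (N := derivedSeries _ 2) φ (derivedSeries_le_ker φ hK) hx h
  obtain ⟨a, ha⟩ := exists_ne (1 : A)
  obtain ⟨b, hb⟩ := exists_ne (1 : B)
  have hsnd : Coprod.snd g = 1 := Coprod.snd_eq_one_of_commute_toWreath ha
    (hcomm (Coprod.toWreath A B) (SemidirectProduct.derivedSeries_two_eq_bot _) (Coprod.inl a))
  have hfst : Coprod.fst g = 1 := by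
    rw [← Coprod.snd_swap]
    exact Coprod.snd_eq_one_of_commute_toWreath hb
      (hcomm ((Coprod.toWreath B A).comp (Coprod.swap A B))
        (SemidirectProduct.derivedSeries_two_eq_bot _) (Coprod.inr b))
  exact mem_map_of_mem _ (Coprod.mem_commutator_of_fst_eq_one_of_snd_eq_one hfst hsnd)

/-- Let `A` and `B` be nontrivial finite abelian groups, `G = A ∗ B` their free product, and
`H = G/γ_2([G,G])` where `γ_2([G,G]) = ⁅[G,G],[G,G]⁆`. Then every element of the center of `H`
lies in the image of the commutator subgroup `[G,G]` under the quotient map `G → H`. -/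
theorem center_le_image_commutator
    (A B : Type) [CommGroup A] [CommGroup B] [Finite A] [Finite B]
    [Nontrivial A] [Nontrivial B] :
    ∀ x ∈ Subgroup.center
        (Monoid.Coprod A B ⧸
          (⁅commutator (Monoid.Coprod A B), commutator (Monoid.Coprod A B)⁆ :
            Subgroup (Monoid.Coprod A B))),
      x ∈ Subgroup.map
        (QuotientGroup.mk'
          (⁅commutator (Monoid.Coprod A B), commutator (Monoid.Coprod A B)⁆ :
            Subgroup (Monoid.Coprod A B)))
        (commutator (Monoid.Coprod A B)) :=
  center_le_image_commutator_general A B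
end
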